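/- arXiv:1608.04477 — 9 statements merged into one kernel-verified Lean document; each statement's English description precedes it below -/
import Mathlib

section
/- Let c(x) = ∑_{1≤i<j≤N} c_{i,j}(x_i,x_j) on X = X_1×...×X_N and suppose Γ ⊆ X is nonempty. If for each pair i<j the projection Γ_{i,j} = P_{i,j}(Γ) is contained in the graph of ∂_{c_{i,j}} f_{i,j} for a proper function f_{i,j} : X_i → (-∞,+∞], then the functions u_i(x_i) = ∑_{k>i} f_{i,k}(x_i) + ∑_{k<i} f_{k,i}^{c_{k,i}}(x_i) form a c-splitting tuple of Γ: c ≤ ∑_i u_i on X with equality on Γ. Consequently Γ is c-cyclically monotone. -/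
/-!
For `i < j`, the Fenchel–Young inequality `c_{ij}(x_i, x_j) ≤ f_{ij}(x_i) + f_{ij}^{c_{ij}}(x_j)`
holds everywhere, with equality on `Γ` by assumption. Summing over all pairs and regrouping the
terms by the variable they depend on gives the splitting tuple. Any splitting tuple certifies
cyclic monotonicity: permuting the points coordinatewise does not change the total
`∑ⱼ ∑ᵢ uᵢ`, which bounds the cost of the permuted points and equals the cost of the original ones.
-/

/-- The `c`-conjugate of `f : X₁ → (-∞,+∞]` with respect to a two-marginal
cost `c : X₁ × X₂ → ℝ`. -/
noncomputable def cConj {X1 X2 : Type*} (c : X1 → X2 → ℝ) (f : X1 → EReal)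
    (x2 : X2) : EReal :=
  ⨆ x1, ((c x1 x2 : EReal) - f x1)

/-- `Γ` is `c`-cyclically monotone. -/
def CCyclicallyMonotone {N : ℕ} {X : Fin N → Type*}
    (c : (∀ i, X i) → ℝ) (Γ : Set (∀ i, X i)) : Prop :=
  ∀ (n : ℕ) (p : Fin n → ∀ i, X i), (∀ j, p j ∈ Γ) →
    ∀ σ : Fin N → Equiv.Perm (Fin n),
      ∑ j, c (fun i => p (σ i j) i) ≤ ∑ j, c (p j)

open Finset

theorem EReal.coe_finsetSum {α : Type*} (s : Finset α) (g : α → ℝ) :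
    ((∑ a ∈ s, g a : ℝ) : EReal) = ∑ a ∈ s, (g a : EReal) :=
  map_sum (⟨⟨((↑) : ℝ → EReal), EReal.coe_zero⟩, EReal.coe_add⟩ : ℝ →+ EReal) g s

section cConj

variable {X1 X2 : Type*} {c : X1 → X2 → ℝ} {f : X1 → EReal}

theorem coe_sub_le_cConj (x1 : X1) (x2 : X2) : (c x1 x2 : EReal) - f x1 ≤ cConj c f x2 :=
  le_iSup (fun y => (c y x2 : EReal) - f y) x1

theorem cConj_ne_bot {x1 : X1} (hx1 : f x1 ≠ ⊤) (x2 : X2) : cConj c f x2 ≠ ⊥ := by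
  refine ne_bot_of_le_ne_bot ?_ (coe_sub_le_cConj (c := c) x1 x2)
  generalize f x1 = y at hx1
  induction y using EReal.rec with
  | bot => simp
  | coe r => exact EReal.coe_sub _ r ▸ EReal.coe_ne_bot _
  | top => exact absurd rfl hx1

theorem coe_le_add_cConj {x1 : X1} {x2 : X2} (hx1 : f x1 ≠ ⊥) (hx2 : cConj c f x2 ≠ ⊥) :
    (c x1 x2 : EReal) ≤ f x1 + cConj c f x2 := by
  rw [add_comm, ← EReal.sub_le_iff_le_add (.inl hx1) (.inr hx2)]
  exact coe_sub_le_cConj x1 x2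

end cConj

def IsCSplittingTuple {N : ℕ} {X : Fin N → Type*} (c : (∀ i, X i) → ℝ)
    (Γ : Set (∀ i, X i)) (u : ∀ i, X i → EReal) : Prop :=
  (∀ x, (c x : EReal) ≤ ∑ i, u i (x i)) ∧ ∀ x ∈ Γ, (c x : EReal) = ∑ i, u i (x i)

theorem IsCSplittingTuple.cCyclicallyMonotone {N : ℕ} {X : Fin N → Type*}
    {c : (∀ i, X i) → ℝ} {Γ : Set (∀ i, X i)} {u : ∀ i, X i → EReal}
    (hu : IsCSplittingTuple c Γ u) : CCyclicallyMonotone c Γ := by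
  intro n p hp σ
  rw [← EReal.coe_le_coe_iff, EReal.coe_finsetSum, EReal.coe_finsetSum]
  calc ∑ j, (c (fun i => p (σ i j) i) : EReal)
      ≤ ∑ j, ∑ i, u i (p (σ i j) i) := sum_le_sum fun j _ => hu.1 _
    _ = ∑ i, ∑ j, u i (p (σ i j) i) := sum_comm
    _ = ∑ i, ∑ j, u i (p j i) :=
        sum_congr rfl fun i _ => Fintype.sum_equiv (σ i) _ _ fun _ => rfl
    _ = ∑ j, ∑ i, u i (p j i) := sum_comm
    _ = ∑ j, (c (p j) : EReal) := sum_congr rfl fun j _ => (hu.2 _ (hp j)).symm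

theorem sum_sum_Ioi_add_sum_Iio {ι M : Type*} [Fintype ι] [LinearOrder ι]
    [LocallyFiniteOrderTop ι] [LocallyFiniteOrderBot ι] [AddCommMonoid M] (F G : ι → ι → M) :
    ∑ i, (∑ j ∈ Ioi i, F i j + ∑ k ∈ Iio i, G k i) = ∑ i, ∑ j ∈ Ioi i, (F i j + G i j) := by
  have hswap : ∑ i, ∑ k ∈ Iio i, G k i = ∑ k, ∑ i ∈ Ioi k, G k i :=
    sum_comm' fun _ _ => by simp only [mem_Iio, mem_Ioi, mem_univ, and_true, true_and]
  simp only [sum_add_distrib, hswap]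

theorem isCSplittingTuple_of_pairwise {N : ℕ} {X : Fin N → Type*}
    {cij : ∀ i j : Fin N, X i → X j → ℝ} {Γ : Set (∀ i, X i)}
    {f : ∀ i : Fin N, Fin N → X i → EReal} {g : Fin N → ∀ j : Fin N, X j → EReal}
    (hle : ∀ i j, i < j → ∀ x1 x2, (cij i j x1 x2 : EReal) ≤ f i j x1 + g i j x2)
    (heq : ∀ x ∈ Γ, ∀ i j, i < j → f i j (x i) + g i j (x j) = cij i j (x i) (x j)) :
    IsCSplittingTuple (fun x => ∑ i, ∑ j ∈ Ioi i, cij i j (x i) (x j)) Γ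
      (fun i xi => ∑ j ∈ Ioi i, f i j xi + ∑ k ∈ Iio i, g k i xi) := by
  refine ⟨fun x => ?_, fun x hx => ?_⟩ <;>
    simp only [sum_sum_Ioi_add_sum_Iio, EReal.coe_finsetSum]
  · exact sum_le_sum fun i _ => sum_le_sum fun j hj => hle i j (mem_Ioi.mp hj) _ _
  · exact sum_congr rfl fun i _ => sum_congr rfl fun j hj => (heq x hx i j (mem_Ioi.mp hj)).symm

theorem pairwise_monotone_projections_give_splitting_tuple_general
    {N : ℕ} {X : Fin N → Type*}
    (cij : ∀ i j : Fin N, X i → X j → ℝ)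
    (f : ∀ i j : Fin N, X i → EReal) (hfbot : ∀ i j (x : X i), f i j x ≠ ⊥)
    (hfproper : ∀ i j : Fin N, i < j → ∃ x : X i, f i j x ≠ ⊤)
    (Γ : Set (∀ i, X i))
    -- each two-marginal projection `Γ_{i,j}` is contained in `gra ∂_{c_{i,j}} f_{i,j}`:
    (hsub : ∀ x ∈ Γ, ∀ i j : Fin N, i < j →
      f i j (x i) + cConj (cij i j) (f i j) (x j) = (cij i j (x i) (x j) : EReal)) :
    -- the `uᵢ` form a `c`-splitting tuple of `Γ`, and `Γ` is `c`-cyclically monotone: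
    (∀ x : ∀ i, X i,
      ((∑ i, ∑ j ∈ Finset.Ioi i, cij i j (x i) (x j) : ℝ) : EReal) ≤
        ∑ i, (∑ j ∈ Finset.Ioi i, f i j (x i) +
              ∑ k ∈ Finset.Iio i, cConj (cij k i) (f k i) (x i))) ∧
    (∀ x ∈ Γ,
      ((∑ i, ∑ j ∈ Finset.Ioi i, cij i j (x i) (x j) : ℝ) : EReal) =
        ∑ i, (∑ j ∈ Finset.Ioi i, f i j (x i) +
              ∑ k ∈ Finset.Iio i, cConj (cij k i) (f k i) (x i))) ∧
    CCyclicallyMonotone (fun x => ∑ i, ∑ j ∈ Finset.Ioi i, cij i j (x i) (x j)) Γ := by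
  have hsplit := isCSplittingTuple_of_pairwise (g := fun i j => cConj (cij i j) (f i j))
    (fun i j hij _ _ =>
      have ⟨_, hx⟩ := hfproper i j hij
      coe_le_add_cConj (hfbot i j _) (cConj_ne_bot hx _))
    hsub
  exact ⟨hsplit.1, hsplit.2, hsplit.cCyclicallyMonotone⟩

theorem pairwise_monotone_projections_give_splitting_tuple
    {N : ℕ} (hN : 2 ≤ N) {X : Fin N → Type*} (hne : ∀ i, Nonempty (X i))
    (cij : ∀ i j : Fin N, X i → X j → ℝ)
    (f : ∀ i j : Fin N, X i → EReal) (hfbot : ∀ i j (x : X i), f i j x ≠ ⊥)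
    (hfproper : ∀ i j : Fin N, i < j → ∃ x : X i, f i j x ≠ ⊤)
    (Γ : Set (∀ i, X i)) (hΓne : Γ.Nonempty)
    -- each two-marginal projection `Γ_{i,j}` is contained in `gra ∂_{c_{i,j}} f_{i,j}`:
    (hsub : ∀ x ∈ Γ, ∀ i j : Fin N, i < j →
      f i j (x i) + cConj (cij i j) (f i j) (x j) = (cij i j (x i) (x j) : EReal)) :
    -- the `uᵢ` form a `c`-splitting tuple of `Γ`, and `Γ` is `c`-cyclically monotone:
    (∀ x : ∀ i, X i,
      ((∑ i, ∑ j ∈ Finset.Ioi i, cij i j (x i) (x j) : ℝ) : EReal) ≤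
        ∑ i, (∑ j ∈ Finset.Ioi i, f i j (x i) +
              ∑ k ∈ Finset.Iio i, cConj (cij k i) (f k i) (x i))) ∧
    (∀ x ∈ Γ,
      ((∑ i, ∑ j ∈ Finset.Ioi i, cij i j (x i) (x j) : ℝ) : EReal) =
        ∑ i, (∑ j ∈ Finset.Ioi i, f i j (x i) +
              ∑ k ∈ Finset.Iio i, cConj (cij k i) (f k i) (x i))) ∧
    CCyclicallyMonotone (fun x => ∑ i, ∑ j ∈ Finset.Ioi i, cij i j (x i) (x j)) Γ :=
  pairwise_monotone_projections_give_splitting_tuple_general cij f hfbot hfproper Γ hsub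
end

section
/- In the setting of the previous statement, if additionally Γ_{i,j} = gra(∂_{c_{i,j}} f_{i,j}) for each i<j and Γ = ⋂_{i<j} P_{i,j}^{-1}(Γ_{i,j}), then equality c(x_1,...,x_N) = ∑_i u_i(x_i) holds if and only if (x_1,...,x_N) ∈ Γ. -/
open scoped BigOperators

/-!
Each pairwise cost is bounded by the corresponding Fenchel–Young sum,
`c_{i,j}(x_i, x_j) ≤ f_{i,j}(x_i) + f_{i,j}^c(x_j)`, and after exchanging the order of summation
in the conjugate terms, `∑_i u_i(x_i)` is the sum of these bounds over all pairs `i < j`.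
A sum of finite reals equals a termwise larger sum in `(-∞, +∞]` exactly when every term is
equal, and the pairwise equality `f_{i,j}(x_i) + f_{i,j}^c(x_j) = c_{i,j}(x_i, x_j)` says that
`(x_i, x_j) ∈ Γ_{i,j}`.
-/

namespace EReal

theorem coe_finset_sum {ι : Type*} (s : Finset ι) (r : ι → ℝ) :
    ((∑ i ∈ s, r i : ℝ) : EReal) = ∑ i ∈ s, (r i : EReal) :=
  map_sum (⟨⟨Real.toEReal, coe_zero⟩, coe_add⟩ : ℝ →+ EReal) r s

variable {ι : Type*} [DecidableEq ι] {s : Finset ι} {r : ι → ℝ} {h : ι → EReal}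

theorem coe_sum_lt_sum_of_le_of_lt (hle : ∀ i ∈ s, (r i : EReal) ≤ h i) {a : ι} (ha : a ∈ s)
    (hlt : (r a : EReal) < h a) : ((∑ i ∈ s, r i : ℝ) : EReal) < ∑ i ∈ s, h i := by
  have hrest : ((∑ i ∈ s.erase a, r i : ℝ) : EReal) ≤ ∑ i ∈ s.erase a, h i := by
    rw [coe_finset_sum]
    exact Finset.sum_le_sum fun i hi => hle i (Finset.mem_of_mem_erase hi)
  rw [← Finset.add_sum_erase s r ha, ← Finset.add_sum_erase s h ha, coe_add]
  exact (add_lt_add_right_coe hlt _).trans_le (add_le_add_right hrest _)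

theorem coe_sum_eq_sum_iff_of_le (hle : ∀ i ∈ s, (r i : EReal) ≤ h i) :
    ((∑ i ∈ s, r i : ℝ) : EReal) = ∑ i ∈ s, h i ↔ ∀ i ∈ s, h i = r i := by
  refine ⟨fun heq a ha => ?_, fun hall => ?_⟩
  · by_contra hne
    exact (coe_sum_lt_sum_of_le_of_lt hle ha ((hle a ha).lt_of_ne' hne)).ne heq
  · rw [coe_finset_sum]
    exact Finset.sum_congr rfl fun i hi => (hall i hi).symm

end EReal

section cConj

variable {X1 X2 : Type*} (c : X1 → X2 → ℝ) {f : X1 → EReal}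

theorem cConj_ne_bot_s9 (hfin : ∃ x, f x ≠ ⊥ ∧ f x ≠ ⊤) (b : X2) : cConj c f b ≠ ⊥ := by
  obtain ⟨z, hz_bot, hz_top⟩ := hfin
  lift f z to ℝ using ⟨hz_top, hz_bot⟩ with y hy
  refine ne_bot_of_le_ne_bot ?_ (le_iSup (fun x1 => (c x1 b : EReal) - f x1) z)
  rw [← hy, ← EReal.coe_sub]
  exact EReal.coe_ne_bot _

theorem coe_le_add_cConj_s9 (hfin : ∃ x, f x ≠ ⊥ ∧ f x ≠ ⊤) {a : X1} (ha : f a ≠ ⊥) (b : X2) :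
    (c a b : EReal) ≤ f a + cConj c f b := by
  rw [add_comm, ← EReal.sub_le_iff_le_add (.inl ha) (.inr (cConj_ne_bot_s9 c hfin b))]
  exact le_iSup (fun x1 => (c x1 b : EReal) - f x1) a

end cConj

theorem Finset.sum_sum_Iio_eq_sum_sum_Ioi {α M : Type*} [Fintype α] [LinearOrder α]
    [LocallyFiniteOrderBot α] [LocallyFiniteOrderTop α] [AddCommMonoid M] (g : α → α → M) :
    ∑ i, ∑ k ∈ Iio i, g k i = ∑ i, ∑ j ∈ Ioi i, g i j :=
  Finset.sum_comm' fun _ _ => by simp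

theorem equality_iff_mem_of_projections_eq_graphs_general
    {N : ℕ} {X : Fin N → Type*}
    (cij : ∀ i j : Fin N, X i → X j → ℝ)
    (f : ∀ i j : Fin N, X i → EReal) (hfbot : ∀ i j (x : X i), f i j x ≠ ⊥)
    (hfproper : ∀ i j : Fin N, i < j → ∃ x : X i, f i j x ≠ ⊤)
    (Γ : Set (∀ i, X i))
    -- `Γ_{i,j} = gra (∂_{c_{i,j}} f_{i,j})` for each `i < j`:
    (hgraph : ∀ i j : Fin N, i < j → ∀ (a : X i) (b : X j),
      ((a, b) ∈ (fun x : ∀ k, X k => ((x i : X i), (x j : X j))) '' Γ ↔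
        f i j a + cConj (cij i j) (f i j) b = (cij i j a b : EReal)))
    -- `Γ = ⋂_{i<j} P_{i,j}⁻¹(Γ_{i,j})`:
    (hinter : ∀ x : ∀ i, X i, x ∈ Γ ↔ ∀ i j : Fin N, i < j →
      ((x i, x j) ∈ (fun y : ∀ k, X k => ((y i : X i), (y j : X j))) '' Γ)) :
    ∀ x : ∀ i, X i,
      (((∑ i, ∑ j ∈ Finset.Ioi i, cij i j (x i) (x j) : ℝ) : EReal) =
        ∑ i, (∑ j ∈ Finset.Ioi i, f i j (x i) +
              ∑ k ∈ Finset.Iio i, cConj (cij k i) (f k i) (x i))) ↔ x ∈ Γ := by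
  intro x
  have hle : ∀ i, ∀ j ∈ Finset.Ioi i,
      (cij i j (x i) (x j) : EReal) ≤ f i j (x i) + cConj (cij i j) (f i j) (x j) :=
    fun i j hj =>
      have ⟨z, hz⟩ := hfproper i j (Finset.mem_Ioi.mp hj)
      coe_le_add_cConj_s9 _ ⟨z, hfbot i j z, hz⟩ (hfbot i j (x i)) (x j)
  have hpairs : ∀ i, (∑ j ∈ Finset.Ioi i, (f i j (x i) + cConj (cij i j) (f i j) (x j)) =
        ((∑ j ∈ Finset.Ioi i, cij i j (x i) (x j) : ℝ) : EReal)) ↔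
      ∀ j, i < j → f i j (x i) + cConj (cij i j) (f i j) (x j) = cij i j (x i) (x j) := by
    intro i
    rw [eq_comm, EReal.coe_sum_eq_sum_iff_of_le (hle i)]
    simp only [Finset.mem_Ioi]
  rw [Finset.sum_add_distrib, Finset.sum_sum_Iio_eq_sum_sum_Ioi, ← Finset.sum_add_distrib]
  simp_rw [← Finset.sum_add_distrib]
  rw [EReal.coe_sum_eq_sum_iff_of_le fun i _ => EReal.coe_finset_sum _ _ ▸
      Finset.sum_le_sum (hle i), hinter]
  simp only [Finset.mem_univ, true_implies, hpairs]
  exact forall₂_congr fun i j => forall_congr' fun hij => (hgraph i j hij (x i) (x j)).symm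

theorem equality_iff_mem_of_projections_eq_graphs
    {N : ℕ} (hN : 2 ≤ N) {X : Fin N → Type*} (hne : ∀ i, Nonempty (X i))
    (cij : ∀ i j : Fin N, X i → X j → ℝ)
    (f : ∀ i j : Fin N, X i → EReal) (hfbot : ∀ i j (x : X i), f i j x ≠ ⊥)
    (hfproper : ∀ i j : Fin N, i < j → ∃ x : X i, f i j x ≠ ⊤)
    (Γ : Set (∀ i, X i)) (hΓne : Γ.Nonempty)
    -- `Γ_{i,j} = gra (∂_{c_{i,j}} f_{i,j})` for each `i < j`:
    (hgraph : ∀ i j : Fin N, i < j → ∀ (a : X i) (b : X j),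
      ((a, b) ∈ (fun x : ∀ k, X k => ((x i : X i), (x j : X j))) '' Γ ↔
        f i j a + cConj (cij i j) (f i j) b = (cij i j a b : EReal)))
    -- `Γ = ⋂_{i<j} P_{i,j}⁻¹(Γ_{i,j})`:
    (hinter : ∀ x : ∀ i, X i, x ∈ Γ ↔ ∀ i j : Fin N, i < j →
      ((x i, x j) ∈ (fun y : ∀ k, X k => ((y i : X i), (y j : X j))) '' Γ)) :
    ∀ x : ∀ i, X i,
      (((∑ i, ∑ j ∈ Finset.Ioi i, cij i j (x i) (x j) : ℝ) : EReal) =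
        ∑ i, (∑ j ∈ Finset.Ioi i, f i j (x i) +
              ∑ k ∈ Finset.Iio i, cConj (cij k i) (f k i) (x i))) ↔ x ∈ Γ :=
  equality_iff_mem_of_projections_eq_graphs_general cij f hfbot hfproper Γ hgraph hinter
end

section
/- Let Q_1,...,Q_N ∈ ℝ^{d×d} be symmetric positive definite and pairwise commuting, M_i = (∑_{k≠i} Q_k) Q_i^{-1}, and q_{M_i}(x) = (1/2)⟨x, M_i x⟩. Then ∑_{1≤i<j≤N} ⟨x_i, x_j⟩ ≤ ∑_{i=1}^N q_{M_i}(x_i) for all (x_1,...,x_N) ∈ (ℝ^d)^N, with equality if and only if there exists v ∈ ℝ^d with x_i = Q_i v for all i. -/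
/-! Writing `x i = Q i v i`, symmetry and commutativity of the `Q i` turn `q_{M_i}(x_i)` into
`½ ∑_{k ≠ i} ⟨v_i, Q_i Q_k v_i⟩`, and polarizing each pair `{i, j}` gives
`∑_i q_{M_i}(x_i) = ∑_{i<j} ⟨x_i, x_j⟩ + ½ ∑_{i<j} ⟨v_i - v_j, Q_i Q_j (v_i - v_j)⟩`.
A product of commuting positive definite matrices is positive definite, so the defect is
nonnegative and vanishes exactly when all the `v_i` coincide. -/

open Matrix Finset
open scoped MatrixOrder

theorem exists_forall_eq_iff_forall_lt_imp_eq {ι α : Type*} [LinearOrder ι] [Nonempty α]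
    {f : ι → α} : (∃ a, ∀ i, f i = a) ↔ ∀ i j, i < j → f i = f j := by
  refine ⟨fun ⟨a, ha⟩ i j _ => (ha i).trans (ha j).symm, fun h => ?_⟩
  rcases isEmpty_or_nonempty ι with hι | ⟨⟨i₀⟩⟩
  · exact ⟨Classical.arbitrary α, isEmptyElim⟩
  · refine ⟨f i₀, fun i => ?_⟩
    rcases lt_trichotomy i i₀ with hlt | rfl | hgt
    exacts [h i i₀ hlt, rfl, (h i₀ i hgt).symm]

namespace Matrix

variable {n : Type*}

theorem PosDef.isSymm {A : Matrix n n ℝ} (hA : A.PosDef) : A.IsSymm :=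
  isHermitian_iff_isSymm.mp hA.isHermitian

variable [Fintype n]

section CommRing

variable {R : Type*} [CommRing R]

theorem IsSymm.dotProduct_mulVec_comm {A : Matrix n n R} (hA : A.IsSymm) (u w : n → R) :
    u ⬝ᵥ A *ᵥ w = w ⬝ᵥ A *ᵥ u := by
  rw [dotProduct_mulVec, ← mulVec_transpose, hA.eq, dotProduct_comm]

theorem IsSymm.mulVec_dotProduct_mulVec {A : Matrix n n R} (hA : A.IsSymm) (B : Matrix n n R)
    (u w : n → R) : (A *ᵥ u) ⬝ᵥ (B *ᵥ w) = u ⬝ᵥ (A * B) *ᵥ w := by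
  rw [← mulVec_mulVec, dotProduct_mulVec u, ← mulVec_transpose, hA.eq]

theorem IsSymm.mul_of_commute {A B : Matrix n n R} (hA : A.IsSymm) (hB : B.IsSymm)
    (hAB : Commute A B) : (A * B).IsSymm := by
  rw [IsSymm, transpose_mul, hA.eq, hB.eq, hAB.eq]

theorem IsSymm.dotProduct_mulVec_add_dotProduct_mulVec {P : Matrix n n R} (hP : P.IsSymm)
    (u w : n → R) :
    u ⬝ᵥ P *ᵥ u + w ⬝ᵥ P *ᵥ w = 2 * (u ⬝ᵥ P *ᵥ w) + (u - w) ⬝ᵥ P *ᵥ (u - w) := by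
  simp only [mulVec_sub, sub_dotProduct, dotProduct_sub, hP.dotProduct_mulVec_comm w u]
  ring

end CommRing

theorem PosSemidef.dotProduct_mulVec_self_nonneg {A : Matrix n n ℝ} (hA : A.PosSemidef)
    (w : n → ℝ) : 0 ≤ w ⬝ᵥ A *ᵥ w := by
  simpa using hA.dotProduct_mulVec_nonneg w

theorem PosDef.mul_of_commute [DecidableEq n] {A B : Matrix n n ℝ} (hA : A.PosDef)
    (hB : B.PosDef) (hAB : Commute A B) : (A * B).PosDef :=
  isStrictlyPositive_iff_posDef.mp
    ((hA.isStrictlyPositive.commute_iff hB.isStrictlyPositive).mp hAB)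

theorem PosDef.dotProduct_mulVec_self_eq_zero_iff {A : Matrix n n ℝ} (hA : A.PosDef)
    {w : n → ℝ} : w ⬝ᵥ A *ᵥ w = 0 ↔ w = 0 := by
  refine ⟨fun h => ?_, by rintro rfl; simp⟩
  by_contra hw
  simpa [h] using hA.dotProduct_mulVec_pos hw

end Matrix

section QuadraticSplitting

variable {ι n : Type*} [Fintype ι] [LinearOrder ι] [LocallyFiniteOrderTop ι] [Fintype n]

def splittingDefect {R : Type*} [CommRing R] (Q : ι → Matrix n n R) (v : ι → n → R) : R :=
  ∑ i, ∑ j ∈ Ioi i, (v i - v j) ⬝ᵥ (Q i * Q j) *ᵥ (v i - v j)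

theorem sum_mulVec_dotProduct_sum_erase_mulVec [LocallyFiniteOrderBot ι] {R : Type*} [CommRing R]
    {Q : ι → Matrix n n R} (hsymm : ∀ i, (Q i).IsSymm) (hcomm : ∀ i j, Commute (Q i) (Q j))
    (v : ι → n → R) :
    ∑ i, (Q i *ᵥ v i) ⬝ᵥ (∑ k ∈ univ.erase i, Q k) *ᵥ v i =
      2 * ∑ i, ∑ j ∈ Ioi i, (Q i *ᵥ v i) ⬝ᵥ (Q j *ᵥ v j) + splittingDefect Q v := by
  have hpair : ∀ i j, (Q i *ᵥ v i) ⬝ᵥ (Q j *ᵥ v i) + (Q j *ᵥ v j) ⬝ᵥ (Q i *ᵥ v j) =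
      2 * ((Q i *ᵥ v i) ⬝ᵥ (Q j *ᵥ v j)) + (v i - v j) ⬝ᵥ (Q i * Q j) *ᵥ (v i - v j) := by
    intro i j
    rw [(hsymm i).mulVec_dotProduct_mulVec, (hsymm j).mulVec_dotProduct_mulVec,
      (hsymm i).mulVec_dotProduct_mulVec, (hcomm j i).eq,
      ((hsymm i).mul_of_commute (hsymm j) (hcomm i j)).dotProduct_mulVec_add_dotProduct_mulVec]
  simp only [sum_mulVec, dotProduct_sum, ← compl_singleton]
  rw [← sum_sum_Ioi_add_eq_sum_sum_off_diag fun j i => (Q i *ᵥ v i) ⬝ᵥ (Q j *ᵥ v i)]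
  simp only [hpair, sum_add_distrib, mul_sum, splittingDefect]

theorem splittingDefect_nonneg [DecidableEq n] {Q : ι → Matrix n n ℝ} (hpos : ∀ i, (Q i).PosDef)
    (hcomm : ∀ i j, Commute (Q i) (Q j)) (v : ι → n → ℝ) : 0 ≤ splittingDefect Q v :=
  sum_nonneg fun i _ => sum_nonneg fun j _ =>
    ((hpos i).mul_of_commute (hpos j) (hcomm i j)).posSemidef.dotProduct_mulVec_self_nonneg _

theorem splittingDefect_eq_zero_iff [DecidableEq n] {Q : ι → Matrix n n ℝ}
    (hpos : ∀ i, (Q i).PosDef) (hcomm : ∀ i j, Commute (Q i) (Q j)) (v : ι → n → ℝ) :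
    splittingDefect Q v = 0 ↔ ∃ w, ∀ i, v i = w := by
  have hP : ∀ i j, (Q i * Q j).PosDef := fun i j => (hpos i).mul_of_commute (hpos j) (hcomm i j)
  have hterm_nonneg : ∀ i j, 0 ≤ (v i - v j) ⬝ᵥ (Q i * Q j) *ᵥ (v i - v j) := fun i j =>
    (hP i j).posSemidef.dotProduct_mulVec_self_nonneg _
  rw [splittingDefect, sum_eq_zero_iff_of_nonneg fun i _ => sum_nonneg fun j _ => hterm_nonneg i j,
    exists_forall_eq_iff_forall_lt_imp_eq]
  simp only [mem_univ, true_implies, sum_eq_zero_iff_of_nonneg fun j _ => hterm_nonneg _ j, mem_Ioi,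
    (hP _ _).dotProduct_mulVec_self_eq_zero_iff, sub_eq_zero]

end QuadraticSplitting

theorem quadratic_splitting_for_commuting_posdef_general
    {d N : ℕ} (Q : Fin N → Matrix (Fin d) (Fin d) ℝ)
    (hpos : ∀ i, (Q i).PosDef)
    (hcomm : ∀ i j, Q i * Q j = Q j * Q i)
    (M : Fin N → Matrix (Fin d) (Fin d) ℝ)
    (hM : ∀ i, M i = (∑ k ∈ Finset.univ.erase i, Q k) * (Q i)⁻¹)
    (x : Fin N → Fin d → ℝ) :
    (∑ i, ∑ j ∈ Finset.Ioi i, x i ⬝ᵥ x j) ≤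
        ∑ i, (1/2 : ℝ) * (x i ⬝ᵥ (M i).mulVec (x i)) ∧
      ((∑ i, ∑ j ∈ Finset.Ioi i, x i ⬝ᵥ x j) =
          ∑ i, (1/2 : ℝ) * (x i ⬝ᵥ (M i).mulVec (x i)) ↔
        ∃ v : Fin d → ℝ, ∀ i, x i = (Q i).mulVec v) := by
  have hunit : ∀ i, IsUnit (Q i) := fun i => (hpos i).isUnit
  choose v hv using fun i => mulVec_surjective_iff_isUnit.mpr (hunit i) (x i)
  obtain rfl : x = fun i => Q i *ᵥ v i := funext fun i => (hv i).symm
  beta_reduce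
  have hMQ : ∀ i, M i * Q i = ∑ k ∈ univ.erase i, Q k := fun i => by
    rw [hM, nonsing_inv_mul_cancel_right _ _ ((isUnit_iff_isUnit_det _).mp (hunit i))]
  have hsplit : ∑ i, (1/2 : ℝ) * ((Q i *ᵥ v i) ⬝ᵥ M i *ᵥ (Q i *ᵥ v i)) =
      ∑ i, ∑ j ∈ Ioi i, (Q i *ᵥ v i) ⬝ᵥ (Q j *ᵥ v j) + splittingDefect Q v / 2 := by
    simp only [mulVec_mulVec, hMQ, ← mul_sum]
    rw [sum_mulVec_dotProduct_sum_erase_mulVec (fun i => (hpos i).isSymm) hcomm]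
    ring
  have hD := splittingDefect_nonneg hpos hcomm v
  refine ⟨by rw [hsplit]; linarith, ?_⟩
  rw [hsplit, left_eq_add, div_eq_zero_iff, or_iff_left two_ne_zero,
    splittingDefect_eq_zero_iff hpos hcomm]
  exact exists_congr fun w => forall_congr' fun i =>
    (mulVec_injective_iff_isUnit.mpr (hunit i)).eq_iff.symm

theorem quadratic_splitting_for_commuting_posdef
    {d N : ℕ} (hN : 2 ≤ N) (Q : Fin N → Matrix (Fin d) (Fin d) ℝ)
    (hsymm : ∀ i, (Q i).IsSymm) (hpos : ∀ i, (Q i).PosDef)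
    (hcomm : ∀ i j, Q i * Q j = Q j * Q i)
    (M : Fin N → Matrix (Fin d) (Fin d) ℝ)
    (hM : ∀ i, M i = (∑ k ∈ Finset.univ.erase i, Q k) * (Q i)⁻¹)
    (x : Fin N → Fin d → ℝ) :
    (∑ i, ∑ j ∈ Finset.Ioi i, x i ⬝ᵥ x j) ≤
        ∑ i, (1/2 : ℝ) * (x i ⬝ᵥ (M i).mulVec (x i)) ∧
      ((∑ i, ∑ j ∈ Finset.Ioi i, x i ⬝ᵥ x j) =
          ∑ i, (1/2 : ℝ) * (x i ⬝ᵥ (M i).mulVec (x i)) ↔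
        ∃ v : Fin d → ℝ, ∀ i, x i = (Q i).mulVec v) :=
  quadratic_splitting_for_commuting_posdef_general Q hpos hcomm M hM x
end

section
/- Let Q_1,...,Q_N ∈ ℝ^{d×d} be symmetric positive definite and pairwise commuting, and G_i = (∑_{k=1}^N Q_k) Q_i^{-1}. Then ‖∑_{i=1}^N x_i‖² ≤ ∑_{i=1}^N ⟨x_i, G_i x_i⟩ for all (x_1,...,x_N) ∈ (ℝ^d)^N, with equality if and only if there exists v ∈ ℝ^d with x_i = Q_i v for all i. -/
open scoped MatrixOrder
open Matrix

/-!
Write `x i = Q i a i`. Then `⟨x i, G i x i⟩ = ∑ j ⟨a i, Q i Q j a i⟩` and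
`‖∑ i, x i‖² = ∑ i j ⟨a i, Q i Q j a j⟩`, and since the `Q i` are symmetric and commute, twice the
gap between the two sides is `∑ i j ⟨a i - a j, Q i Q j (a i - a j)⟩`. Commuting positive definite
matrices have a positive definite product, so the gap is nonnegative and vanishes exactly when all
the `a i` coincide.
-/

namespace Matrix

variable {ι n : Type*} [Fintype ι] [Fintype n]

theorem mulVec_dotProduct_mulVec_of_isSymm {R : Type*} [CommSemiring R] {A B : Matrix n n R}
    (hA : A.IsSymm) (u v : n → R) : (A *ᵥ u) ⬝ᵥ (B *ᵥ v) = u ⬝ᵥ ((A * B) *ᵥ v) := by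
  rw [← mulVec_mulVec, dotProduct_mulVec u A, ← vecMul_transpose, hA.eq]

theorem mulVec_dotProduct_mulVec_comm {R : Type*} [CommSemiring R] {A B : Matrix n n R}
    (hA : A.IsSymm) (hB : B.IsSymm) (hAB : Commute A B) (u v : n → R) :
    (A *ᵥ u) ⬝ᵥ (B *ᵥ v) = (B *ᵥ u) ⬝ᵥ (A *ᵥ v) := by
  rw [mulVec_dotProduct_mulVec_of_isSymm hA, mulVec_dotProduct_mulVec_of_isSymm hB, hAB.eq]

theorem two_mul_sum_mulVec_dotProduct_sub_eq_sum_sum {R : Type*} [CommRing R]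
    {Q : ι → Matrix n n R} (hsymm : ∀ i, (Q i).IsSymm) (hcomm : ∀ i j, Commute (Q i) (Q j))
    (a : ι → n → R) :
    2 * (∑ i, (Q i *ᵥ a i) ⬝ᵥ ((∑ k, Q k) *ᵥ a i) - (∑ i, Q i *ᵥ a i) ⬝ᵥ (∑ i, Q i *ᵥ a i)) =
      ∑ i, ∑ j, (a i - a j) ⬝ᵥ ((Q i * Q j) *ᵥ (a i - a j)) := by
  rw [sum_dotProduct]
  simp only [← mulVec_dotProduct_mulVec_of_isSymm (hsymm _), mulVec_sub, sub_dotProduct,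
    dotProduct_sub, Finset.sum_sub_distrib, sum_mulVec, dotProduct_sum]
  have hcross : ∑ i, ∑ j, (Q i *ᵥ a j) ⬝ᵥ (Q j *ᵥ a i) =
      ∑ i, ∑ j, (Q i *ᵥ a i) ⬝ᵥ (Q j *ᵥ a j) :=
    Finset.sum_congr rfl fun i _ => Finset.sum_congr rfl fun j _ =>
      (mulVec_dotProduct_mulVec_comm (hsymm i) (hsymm j) (hcomm i j) _ _).trans
        (dotProduct_comm _ _)
  have hdiag : ∑ i, ∑ j, (Q i *ᵥ a j) ⬝ᵥ (Q j *ᵥ a j) =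
      ∑ i, ∑ j, (Q i *ᵥ a i) ⬝ᵥ (Q j *ᵥ a i) := by
    rw [Finset.sum_comm]
    simp only [dotProduct_comm]
  rw [hcross, hdiag]
  ring

theorem sum_sum_dotProduct_sub_mulVec_sub_nonneg {M : ι → ι → Matrix n n ℝ}
    (hM : ∀ i j, (M i j).PosSemidef) (a : ι → n → ℝ) :
    0 ≤ ∑ i, ∑ j, (a i - a j) ⬝ᵥ (M i j *ᵥ (a i - a j)) :=
  Finset.sum_nonneg fun i _ => Finset.sum_nonneg fun j _ => by
    simpa using (hM i j).dotProduct_mulVec_nonneg (a i - a j)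

theorem sum_sum_dotProduct_sub_mulVec_sub_eq_zero_iff {M : ι → ι → Matrix n n ℝ}
    (hM : ∀ i j, (M i j).PosDef) (a : ι → n → ℝ) :
    ∑ i, ∑ j, (a i - a j) ⬝ᵥ (M i j *ᵥ (a i - a j)) = 0 ↔ ∀ i j, a i = a j := by
  have hterm : ∀ i j, 0 ≤ (a i - a j) ⬝ᵥ (M i j *ᵥ (a i - a j)) := fun i j => by
    simpa using (hM i j).posSemidef.dotProduct_mulVec_nonneg (a i - a j)
  simp only [Finset.sum_eq_zero_iff_of_nonneg (fun i _ => Finset.sum_nonneg fun j _ => hterm i j),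
    Finset.sum_eq_zero_iff_of_nonneg (fun j _ => hterm _ j), Finset.mem_univ, true_implies]
  refine forall₂_congr fun i j => ⟨fun h => ?_, fun h => by simp [h]⟩
  by_contra hne
  simpa [h] using (hM i j).dotProduct_mulVec_pos (sub_ne_zero.mpr hne)

end Matrix

theorem exists_forall_eq_iff_forall_eq {α β : Type*} [Nonempty β] {f : α → β} :
    (∃ b, ∀ a, f a = b) ↔ ∀ a a', f a = f a' := by
  refine ⟨fun ⟨b, hb⟩ a a' => (hb a).trans (hb a').symm, fun h => ?_⟩
  rcases isEmpty_or_nonempty α with _ | ⟨⟨a₀⟩⟩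
  · exact ⟨Classical.arbitrary β, isEmptyElim⟩
  · exact ⟨f a₀, fun a => h a a₀⟩

theorem norm_sq_splitting_for_commuting_posdef_general
    {d N : ℕ} (Q : Fin N → Matrix (Fin d) (Fin d) ℝ)
    (hpos : ∀ i, (Q i).PosDef)
    (hcomm : ∀ i j, Q i * Q j = Q j * Q i)
    (G : Fin N → Matrix (Fin d) (Fin d) ℝ)
    (hG : ∀ i, G i = (∑ k, Q k) * (Q i)⁻¹)
    (x : Fin N → Fin d → ℝ) :
    ((∑ i, x i) ⬝ᵥ (∑ i, x i)) ≤ ∑ i, x i ⬝ᵥ (G i).mulVec (x i) ∧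
      (((∑ i, x i) ⬝ᵥ (∑ i, x i)) = ∑ i, x i ⬝ᵥ (G i).mulVec (x i) ↔
        ∃ v : Fin d → ℝ, ∀ i, x i = (Q i).mulVec v) := by
  have hdet i : IsUnit (Q i).det := (isUnit_iff_isUnit_det _).mp (hpos i).isUnit
  obtain ⟨a, rfl⟩ : ∃ a : Fin N → Fin d → ℝ, x = fun i => Q i *ᵥ a i :=
    ⟨fun i => (Q i)⁻¹ *ᵥ x i, funext fun i => by
      rw [mulVec_mulVec, mul_nonsing_inv _ (hdet i), one_mulVec]⟩
  have hGQ i : G i *ᵥ (Q i *ᵥ a i) = (∑ k, Q k) *ᵥ a i := by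
    rw [hG, mulVec_mulVec, Matrix.mul_assoc, nonsing_inv_mul _ (hdet i), Matrix.mul_one]
  have hprod i j : (Q i * Q j).PosDef :=
    (((hpos i).isStrictlyPositive.commute_iff (hpos j).isStrictlyPositive).mp (hcomm i j)).posDef
  have hsplit := two_mul_sum_mulVec_dotProduct_sub_eq_sum_sum
    (fun i => isHermitian_iff_isSymm.mp (hpos i).isHermitian) hcomm a
  have hnonneg := sum_sum_dotProduct_sub_mulVec_sub_nonneg (fun i j => (hprod i j).posSemidef) a
  simp only [hGQ]
  refine ⟨by linarith, ?_⟩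
  calc _ ↔ ∑ i, ∑ j, (a i - a j) ⬝ᵥ ((Q i * Q j) *ᵥ (a i - a j)) = 0 := by
          rw [← hsplit]
          constructor <;> intro h <;> linarith
    _ ↔ ∀ i j, a i = a j := sum_sum_dotProduct_sub_mulVec_sub_eq_zero_iff hprod a
    _ ↔ ∃ v, ∀ i, a i = v := exists_forall_eq_iff_forall_eq.symm
    _ ↔ ∃ v, ∀ i, Q i *ᵥ a i = Q i *ᵥ v := by
          simp only [(mulVec_injective_of_isUnit (hpos _).isUnit).eq_iff]

theorem norm_sq_splitting_for_commuting_posdef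
    {d N : ℕ} (hN : 2 ≤ N) (Q : Fin N → Matrix (Fin d) (Fin d) ℝ)
    (hsymm : ∀ i, (Q i).IsSymm) (hpos : ∀ i, (Q i).PosDef)
    (hcomm : ∀ i j, Q i * Q j = Q j * Q i)
    (G : Fin N → Matrix (Fin d) (Fin d) ℝ)
    (hG : ∀ i, G i = (∑ k, Q k) * (Q i)⁻¹)
    (x : Fin N → Fin d → ℝ) :
    ((∑ i, x i) ⬝ᵥ (∑ i, x i)) ≤ ∑ i, x i ⬝ᵥ (G i).mulVec (x i) ∧
      (((∑ i, x i) ⬝ᵥ (∑ i, x i)) = ∑ i, x i ⬝ᵥ (G i).mulVec (x i) ↔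
        ∃ v : Fin d → ℝ, ∀ i, x i = (Q i).mulVec v) :=
  norm_sq_splitting_for_commuting_posdef_general Q hpos hcomm G hG x
end

section
/- Define u_1(a,b) = a² if b = 0 and +∞ otherwise; u_2(a,b) = 2a² if a = b and +∞ otherwise; u_3(a,b) = (1/7)(4a² + 3ab + b²) on ℝ². Then for all x_1, x_2, x_3 ∈ ℝ²: ⟨x_1,x_2⟩ + ⟨x_2,x_3⟩ + ⟨x_3,x_1⟩ ≤ u_1(x_1) + u_2(x_2) + u_3(x_3). -/
noncomputable def u₁ (x : ℝ × ℝ) : EReal :=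
  if x.2 = 0 then ((x.1 ^ 2 : ℝ) : EReal) else ⊤

noncomputable def u₂ (x : ℝ × ℝ) : EReal :=
  if x.1 = x.2 then ((2 * x.1 ^ 2 : ℝ) : EReal) else ⊤

noncomputable def u₃ (x : ℝ × ℝ) : EReal :=
  (((1/7 : ℝ) * (4 * x.1 ^ 2 + 3 * x.1 * x.2 + x.2 ^ 2) : ℝ) : EReal)

theorem splitting_inequality_example (x₁ x₂ x₃ : ℝ × ℝ) :
    (((x₁.1 * x₂.1 + x₁.2 * x₂.2) + (x₂.1 * x₃.1 + x₂.2 * x₃.2) +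
        (x₃.1 * x₁.1 + x₃.2 * x₁.2) : ℝ) : EReal) ≤
      u₁ x₁ + u₂ x₂ + u₃ x₃ := by
  unfold u₁ u₂ u₃
  by_cases h1 : x₁.2 = 0
  · by_cases h2 : x₂.1 = x₂.2
    · rw [if_pos h1, if_pos h2]
      rw [← EReal.coe_add, ← EReal.coe_add, EReal.coe_le_coe_iff]
      rw [h1, ← h2]
      nlinarith [sq_nonneg (2*x₁.1 - x₂.1 - x₃.1), sq_nonneg (7*x₂.1 - 3*x₃.1 - 2*x₃.2)]
    · rw [if_neg h2]
      have hb : (if x₁.2 = 0 then ((x₁.1 ^ 2 : ℝ) : EReal) else ⊤) ≠ ⊥ := by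
        split <;> first | exact EReal.coe_ne_bot _ | exact bot_lt_top.ne'
      rw [EReal.add_top_of_ne_bot hb, EReal.top_add_of_ne_bot (EReal.coe_ne_bot _)]
      exact le_top
  · rw [if_neg h1]
    have hb : (if x₂.1 = x₂.2 then ((2 * x₂.1 ^ 2 : ℝ) : EReal) else ⊤) ≠ ⊥ := by
      split <;> first | exact EReal.coe_ne_bot _ | exact bot_lt_top.ne'
    rw [EReal.top_add_of_ne_bot hb, EReal.top_add_of_ne_bot (EReal.coe_ne_bot _)]
    exact le_top
end

section
/- There exists a c-cyclically monotone subset Γ ⊆ (ℝ²)³ for the cost c(x_1,x_2,x_3) = ⟨x_1,x_2⟩ + ⟨x_2,x_3⟩ + ⟨x_3,x_1⟩ such that none of its three two-marginal projections Γ_{1,2}, Γ_{1,3}, Γ_{2,3} is monotone in ℝ²×ℝ². Specifically, Γ = span{((0,0),(−1,−1),(1,−5)), ((1,0),(2,2),(0,7))} has this property. -/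
open scoped BigOperators

abbrev V3 := (ℝ × ℝ) × (ℝ × ℝ) × (ℝ × ℝ)

def ip (a b : ℝ × ℝ) : ℝ := a.1 * b.1 + a.2 * b.2

def cost3 (x : V3) : ℝ := ip x.1 x.2.1 + ip x.2.1 x.2.2 + ip x.2.2 x.1

/-- Multi-marginal `c`-cyclic monotonicity for `N = 3` margins equal to `ℝ²`. -/
def CCyclicallyMonotone3 (c : V3 → ℝ) (Γ : Set V3) : Prop :=
  ∀ (n : ℕ) (p : Fin n → V3), (∀ j, p j ∈ Γ) →
    ∀ σ₁ σ₂ σ₃ : Equiv.Perm (Fin n),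
      ∑ j, c ((p (σ₁ j)).1, (p (σ₂ j)).2.1, (p (σ₃ j)).2.2) ≤ ∑ j, c (p j)

/-- A subset of `ℝ² × ℝ²` is monotone. -/
def Mono2 (M : Set ((ℝ × ℝ) × (ℝ × ℝ))) : Prop :=
  ∀ a ∈ M, ∀ b ∈ M, 0 ≤ ip (a.1 - b.1) (a.2 - b.2)

noncomputable def va : V3 := (((0 : ℝ), (0 : ℝ)), ((-1 : ℝ), (-1 : ℝ)), ((1 : ℝ), (-5 : ℝ)))
noncomputable def wa : V3 := (((1 : ℝ), (0 : ℝ)), ((2 : ℝ), (2 : ℝ)), ((0 : ℝ), (7 : ℝ)))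

lemma span_param (s t : ℝ) :
    s • va + t • wa
      = (((t, 0) : ℝ × ℝ), ((-s + 2*t, -s + 2*t) : ℝ × ℝ), ((s, -5*s + 7*t) : ℝ × ℝ)) := by
  simp [va, wa, Prod.ext_iff]
  exact ⟨by ring, by ring⟩

def q1 (e : ℝ × ℝ) : ℝ := e.2^2
def q2 (e : ℝ × ℝ) : ℝ := 2*e.1^2 - 8*e.1*e.2 + 8*e.2^2
def q3 (e : ℝ × ℝ) : ℝ := 2*e.1^2 - 7*e.1*e.2 + 7*e.2^2

lemma key (sa ta sb tb sc tc : ℝ) :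
    cost3 (((ta, 0) : ℝ × ℝ), ((-sb + 2*tb, -sb + 2*tb) : ℝ × ℝ),
        ((sc, -5*sc + 7*tc) : ℝ × ℝ))
      ≤ q1 (sa, ta) + q2 (sb, tb) + q3 (sc, tc) := by
  simp only [cost3, ip, q1, q2, q3]
  nlinarith [sq_nonneg (ta + sb/2 - tb - sc/2), sq_nonneg (sb - 2*tb - sc + 2*tc)]

lemma diag (s t : ℝ) :
    cost3 (((t, 0) : ℝ × ℝ), ((-s + 2*t, -s + 2*t) : ℝ × ℝ), ((s, -5*s + 7*t) : ℝ × ℝ))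
      = q1 (s, t) + q2 (s, t) + q3 (s, t) := by
  simp only [cost3, ip, q1, q2, q3]; ring

theorem cyclically_monotone_set_with_nonmonotone_projections :
    ∃ Γ : Set V3,
      Γ = (Submodule.span ℝ
        ({(((0 : ℝ), (0 : ℝ)), ((-1 : ℝ), (-1 : ℝ)), ((1 : ℝ), (-5 : ℝ))),
          (((1 : ℝ), (0 : ℝ)), ((2 : ℝ), (2 : ℝ)), ((0 : ℝ), (7 : ℝ)))} : Set V3) :
          Submodule ℝ V3) ∧
      CCyclicallyMonotone3 cost3 Γ ∧
      ¬ Mono2 ((fun x : V3 => (x.1, x.2.1)) '' Γ) ∧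
      ¬ Mono2 ((fun x : V3 => (x.1, x.2.2)) '' Γ) ∧
      ¬ Mono2 ((fun x : V3 => (x.2.1, x.2.2)) '' Γ) := by
  have hva : va ∈ Submodule.span ℝ ({va, wa} : Set V3) :=
    Submodule.subset_span (by simp)
  have hwa : wa ∈ Submodule.span ℝ ({va, wa} : Set V3) :=
    Submodule.subset_span (by simp)
  have hmem : ∀ a b : ℝ, a • va + b • wa ∈ Submodule.span ℝ ({va, wa} : Set V3) :=
    fun a b => Submodule.add_mem _ (Submodule.smul_mem _ _ hva) (Submodule.smul_mem _ _ hwa)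
  refine ⟨(Submodule.span ℝ ({va, wa} : Set V3) : Submodule ℝ V3), by rfl, ?_, ?_, ?_, ?_⟩
  · -- c-cyclic monotonicity
    intro n p hp σ₁ σ₂ σ₃
    have hp' : ∀ j, ∃ a b : ℝ, a • va + b • wa = p j := by
      intro j
      exact Submodule.mem_span_pair.mp (hp j)
    choose s t hst using hp'
    have h1 : ∀ k, (p k).1 = ((t k, 0) : ℝ × ℝ) := by
      intro k; rw [← hst k, span_param]
    have h2 : ∀ k, (p k).2.1 = ((-(s k) + 2*(t k), -(s k) + 2*(t k)) : ℝ × ℝ) := by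
      intro k; rw [← hst k, span_param]
    have h3 : ∀ k, (p k).2.2 = ((s k, -5*(s k) + 7*(t k)) : ℝ × ℝ) := by
      intro k; rw [← hst k, span_param]
    have hpk : ∀ k, p k = (((t k, 0) : ℝ × ℝ),
        ((-(s k) + 2*(t k), -(s k) + 2*(t k)) : ℝ × ℝ),
        ((s k, -5*(s k) + 7*(t k)) : ℝ × ℝ)) := by
      intro k; rw [← hst k, span_param]
    calc ∑ j, cost3 ((p (σ₁ j)).1, (p (σ₂ j)).2.1, (p (σ₃ j)).2.2)
        ≤ ∑ j, (q1 (s (σ₁ j), t (σ₁ j)) + q2 (s (σ₂ j), t (σ₂ j))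
            + q3 (s (σ₃ j), t (σ₃ j))) := by
          refine Finset.sum_le_sum fun j _ => ?_
          rw [h1, h2, h3]
          exact key (s (σ₁ j)) (t (σ₁ j)) (s (σ₂ j)) (t (σ₂ j)) (s (σ₃ j)) (t (σ₃ j))
      _ = ∑ j, (q1 (s j, t j) + q2 (s j, t j) + q3 (s j, t j)) := by
          rw [Finset.sum_add_distrib, Finset.sum_add_distrib,
            Equiv.sum_comp σ₁ (fun k => q1 (s k, t k)),
            Equiv.sum_comp σ₂ (fun k => q2 (s k, t k)),
            Equiv.sum_comp σ₃ (fun k => q3 (s k, t k)),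
            ← Finset.sum_add_distrib, ← Finset.sum_add_distrib]
      _ = ∑ j, cost3 (p j) := by
          refine Finset.sum_congr rfl fun j _ => ?_
          rw [hpk j, diag]
  · -- Γ₁₂ not monotone: take 3•va + wa ↦ ((1,0),(-1,-1)) and 0
    intro h
    have ha : (((1, 0) : ℝ × ℝ), ((-1, -1) : ℝ × ℝ))
        ∈ (fun x : V3 => (x.1, x.2.1)) '' (Submodule.span ℝ ({va, wa} : Set V3)) := by
      refine ⟨(3 : ℝ) • va + (1 : ℝ) • wa, hmem 3 1, ?_⟩
      rw [span_param]; norm_num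
    have hb : (((0, 0) : ℝ × ℝ), ((0, 0) : ℝ × ℝ))
        ∈ (fun x : V3 => (x.1, x.2.1)) '' (Submodule.span ℝ ({va, wa} : Set V3)) := by
      exact ⟨0, Submodule.zero_mem _, rfl⟩
    have := h _ ha _ hb
    norm_num [ip] at this
  · -- Γ₁₃ not monotone: take -va + wa ↦ ((1,0),(-1,12)) and 0
    intro h
    have ha : (((1, 0) : ℝ × ℝ), ((-1, 12) : ℝ × ℝ))
        ∈ (fun x : V3 => (x.1, x.2.2)) '' (Submodule.span ℝ ({va, wa} : Set V3)) := by
      refine ⟨(-1 : ℝ) • va + (1 : ℝ) • wa, hmem (-1) 1, ?_⟩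
      rw [span_param]; norm_num
    have hb : (((0, 0) : ℝ × ℝ), ((0, 0) : ℝ × ℝ))
        ∈ (fun x : V3 => (x.1, x.2.2)) '' (Submodule.span ℝ ({va, wa} : Set V3)) := by
      exact ⟨0, Submodule.zero_mem _, rfl⟩
    have := h _ ha _ hb
    norm_num [ip] at this
  · -- Γ₂₃ not monotone: take 15•va + 8•wa ↦ ((1,1),(15,-19)) and 0
    intro h
    have ha : (((1, 1) : ℝ × ℝ), ((15, -19) : ℝ × ℝ))
        ∈ (fun x : V3 => (x.2.1, x.2.2)) '' (Submodule.span ℝ ({va, wa} : Set V3)) := by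
      refine ⟨(15 : ℝ) • va + (8 : ℝ) • wa, hmem 15 8, ?_⟩
      rw [span_param]; norm_num
    have hb : (((0, 0) : ℝ × ℝ), ((0, 0) : ℝ × ℝ))
        ∈ (fun x : V3 => (x.2.1, x.2.2)) '' (Submodule.span ℝ ({va, wa} : Set V3)) := by
      exact ⟨0, Submodule.zero_mem _, rfl⟩
    have := h _ ha _ hb
    norm_num [ip] at this
end

section
/- Let c(x_1,...,x_N) = ∑_{1≤i<j≤N} x_i x_j on ℝ^N. If (t_1,...,t_N) ∈ ℝ^N is c-monotonically related to (0,...,0), i.e., the two-point set {(t_1,...,t_N), (0,...,0)} is c-monotone, then all t_i have the same sign: either all t_i ≥ 0 or all t_i ≤ 0. -/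
open scoped BigOperators

/-- The classical one-dimensional multi-marginal cost `c(x) = ∑_{i<j} xᵢ xⱼ`. -/
def cost1d {N : ℕ} (x : Fin N → ℝ) : ℝ := ∑ i, ∑ j ∈ Finset.Ioi i, x i * x j

lemma two_cost1d {N : ℕ} (x : Fin N → ℝ) :
    2 * cost1d x = (∑ i, x i)^2 - ∑ i, (x i)^2 := by
  have h := Finset.sum_sum_Ioi_add_eq_sum_sum_off_diag (fun i j : Fin N => x i * x j)
  have hl : ∑ i, ∑ j ∈ Finset.Ioi i, (x j * x i + x i * x j) = 2 * cost1d x := by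
    unfold cost1d
    rw [Finset.mul_sum]
    congr 1; ext i
    rw [Finset.mul_sum]
    congr 1; ext j
    ring
  have hr : ∑ i : Fin N, ∑ j ∈ ({i}ᶜ : Finset (Fin N)), x j * x i
      = (∑ i, x i)^2 - ∑ i, (x i)^2 := by
    have key : ∀ i : Fin N, ∑ j ∈ ({i}ᶜ : Finset (Fin N)), x j * x i
        = (∑ j, x j) * x i - x i * x i := by
      intro i
      have e : ∑ j ∈ ({i}ᶜ : Finset (Fin N)), x j = (∑ j, x j) - x i := by
        have h2 := Finset.sum_compl_add_sum ({i} : Finset (Fin N)) x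
        simp at h2
        linarith
      rw [← Finset.sum_mul, e]
      ring
    rw [Finset.sum_congr rfl fun i _ => key i, Finset.sum_sub_distrib, ← Finset.mul_sum,
      ← pow_two]
    congr 1
    exact Finset.sum_congr rfl fun i _ => (pow_two (x i)).symm
  rw [← hl, h]; convert hr using 3

theorem same_sign_of_c_monotonically_related_to_zero
    {N : ℕ} (hN : 2 ≤ N) (t : Fin N → ℝ)
    -- the two-point set `{t, 0}` is `c`-monotone:
    (hmono : ∀ p : Fin 2 → (Fin N → ℝ), p 0 = t → p 1 = 0 →
      ∀ σ : Fin N → Equiv.Perm (Fin 2),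
        ∑ j, cost1d (fun i => p (σ i j) i) ≤ ∑ j, cost1d (p j)) :
    (∀ i, 0 ≤ t i) ∨ (∀ i, t i ≤ 0) := by
  by_contra hc
  push_neg at hc
  obtain ⟨⟨a, ha⟩, ⟨b, hb⟩⟩ := hc
  -- z = positive part, w = negative part
  set z : Fin N → ℝ := fun i => if 0 ≤ t i then t i else 0 with hz
  set w : Fin N → ℝ := fun i => if 0 ≤ t i then 0 else t i with hw
  set p : Fin 2 → (Fin N → ℝ) := ![t, 0] with hp
  set σ : Fin N → Equiv.Perm (Fin 2) := fun i =>
    if 0 ≤ t i then 1 else Equiv.swap 0 1 with hσ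
  have key := hmono p rfl rfl σ
  have h0 : (fun i => p (σ i 0) i) = z := by
    funext i
    by_cases h : 0 ≤ t i <;> simp [hσ, hp, hz, h]
  have h1 : (fun i => p (σ i 1) i) = w := by
    funext i
    by_cases h : 0 ≤ t i <;> simp [hσ, hp, hw, h, Equiv.swap_apply_right]
  have hsum : ∑ j, cost1d (fun i => p (σ i j) i) = cost1d z + cost1d w := by
    rw [Fin.sum_univ_two, h0, h1]
  have hsum2 : ∑ j, cost1d (p j) = cost1d t := by
    rw [Fin.sum_univ_two]
    simp [hp, cost1d]
  rw [hsum, hsum2] at key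
  -- identity via the square formula
  have hzw : ∀ i, t i = z i + w i := by
    intro i; by_cases h : 0 ≤ t i <;> simp [hz, hw, h]
  have hsq : ∀ i, (t i)^2 = (z i)^2 + (w i)^2 := by
    intro i; by_cases h : 0 ≤ t i <;> simp [hz, hw, h]
  have hid : 2 * cost1d t = 2 * cost1d z + 2 * cost1d w + 2 * ((∑ i, z i) * (∑ i, w i)) := by
    rw [two_cost1d, two_cost1d, two_cost1d]
    have e1 : ∑ i, t i = (∑ i, z i) + (∑ i, w i) := by
      rw [← Finset.sum_add_distrib]; exact Finset.sum_congr rfl fun i _ => hzw i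
    have e2 : ∑ i, (t i)^2 = (∑ i, (z i)^2) + (∑ i, (w i)^2) := by
      rw [← Finset.sum_add_distrib]; exact Finset.sum_congr rfl fun i _ => hsq i
    rw [e1, e2]; ring
  have hzpos : 0 < ∑ i, z i := by
    apply Finset.sum_pos' (fun i _ => by by_cases h : 0 ≤ t i <;> simp [hz, h] <;> linarith)
    exact ⟨b, Finset.mem_univ b, by simp [hz, le_of_lt hb, hb]⟩
  have hwneg : ∑ i, w i < 0 := by
    have h1 : ∀ i ∈ Finset.univ, w i ≤ 0 := fun i _ => by
      by_cases h : 0 ≤ t i <;> simp [hw, h] <;> linarith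
    have h2 : ∑ i, w i ≤ 0 := Finset.sum_nonpos h1
    rcases h2.lt_or_eq with h3 | h3
    · exact h3
    · exfalso
      have := (Finset.sum_eq_zero_iff_of_nonpos h1).mp h3 a (Finset.mem_univ a)
      simp [hw, not_le.mpr ha] at this
      linarith
  nlinarith [key, hid]
end

section
/- Let c(x_1,...,x_N) = ∑_{1≤i<j≤N} x_i x_j on ℝ^N and Γ ⊆ ℝ^N. Then Γ is c-monotone (2-c-monotone) if and only if for every 1 ≤ i < j ≤ N the projection Γ_{i,j} = {(x_i, x_j) : x ∈ Γ} is a monotone subset of ℝ², i.e., (x_i − y_i)(x_j − y_j) ≥ 0 for all x, y ∈ Γ. -/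
open scoped BigOperators

/-- `Γ` is `c`-monotone (i.e. `2`-`c`-monotone). -/
def CMonotone {N : ℕ} (c : (Fin N → ℝ) → ℝ) (Γ : Set (Fin N → ℝ)) : Prop :=
  ∀ p : Fin 2 → (Fin N → ℝ), (∀ j, p j ∈ Γ) →
    ∀ σ : Fin N → Equiv.Perm (Fin 2),
      ∑ j, c (fun i => p (σ i j) i) ≤ ∑ j, c (p j)

lemma perm2 : ∀ τ : Equiv.Perm (Fin 2), (τ 0 = 0 ∧ τ 1 = 1) ∨ (τ 0 = 1 ∧ τ 1 = 0) := by
  decide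

lemma aux {a b A : ℝ} (h1 : 0 ≤ a * (A - a)) (h2 : 0 ≤ b * (A - b)) : 0 ≤ a * b := by
  rcases lt_trichotomy a 0 with ha|ha|ha
  · have hA : A - a ≤ 0 := by
      by_contra hc; push_neg at hc
      nlinarith [mul_neg_of_neg_of_pos ha hc]
    have hb : b ≤ 0 := by
      by_contra hc; push_neg at hc
      nlinarith [mul_pos hc (show 0 < b - A by linarith)]
    exact mul_nonneg_of_nonpos_of_nonpos ha.le hb
  · simp [ha]
  · have hA : 0 ≤ A - a := by
      by_contra hc; push_neg at hc
      nlinarith [mul_neg_of_pos_of_neg ha hc]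
    have hb : 0 ≤ b := by
      by_contra hc; push_neg at hc
      nlinarith [mul_pos (show (0:ℝ) < -b by linarith) (show 0 < A - b by linarith)]
    exact mul_nonneg ha.le hb

lemma sum2_cost {N : ℕ} (f : Fin 2 → Fin N → ℝ) :
    ∑ j, cost1d (f j) = ∑ i, ∑ k ∈ Finset.Ioi i, (f 0 i * f 0 k + f 1 i * f 1 k) := by
  simp only [cost1d, Fin.sum_univ_two, ← Finset.sum_add_distrib]

theorem c_monotone_iff_pairwise_projections_monotone
    {N : ℕ} (hN : 2 ≤ N) (Γ : Set (Fin N → ℝ)) :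
    CMonotone cost1d Γ ↔
      ∀ i j : Fin N, i < j → ∀ x ∈ Γ, ∀ y ∈ Γ,
        0 ≤ (x i - y i) * (x j - y j) := by
  constructor
  · intro h i j hij x hx y hy
    have key : ∀ t : Fin N,
        0 ≤ (x t - y t) * ((∑ k, (x k - y k)) - (x t - y t)) := by
      intro t
      have hp : ∀ j : Fin 2, (![x, y]) j ∈ Γ := by
        intro j; fin_cases j <;> simpa
      have hmain := h ![x, y] hp (fun k => if k = t then Equiv.swap 0 1 else 1)
      rw [sum2_cost, sum2_cost] at hmain
      simp only [apply_ite (fun e : Equiv.Perm (Fin 2) => e 0),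
        apply_ite (fun e : Equiv.Perm (Fin 2) => e 1),
        Equiv.swap_apply_left, Equiv.swap_apply_right, Equiv.Perm.coe_one, id_eq,
        apply_ite (![x, y]), Matrix.cons_val_zero, Matrix.cons_val_one,
        Matrix.head_cons, apply_ite (fun f : Fin N → ℝ => f _)] at hmain
      have h0 : 0 ≤ ∑ i', ∑ k ∈ Finset.Ioi i',
          ((x i' * x k + y i' * y k) -
           ((if i' = t then y else x) i' * (if k = t then y else x) k +
            (if i' = t then x else y) i' * (if k = t then x else y) k)) := by
        simp only [Finset.sum_sub_distrib]
        exact sub_nonneg.mpr hmain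
      have h1 : ∑ i', ∑ k ∈ Finset.Ioi i',
          ((x i' * x k + y i' * y k) -
           ((if i' = t then y else x) i' * (if k = t then y else x) k +
            (if i' = t then x else y) i' * (if k = t then x else y) k))
          = ∑ i', ∑ k ∈ Finset.Ioi i',
            (if i' = t ∨ k = t then (x i' - y i') * (x k - y k) else 0) := by
        refine Finset.sum_congr rfl fun i' _ => Finset.sum_congr rfl fun k hk => ?_
        have hik : i' ≠ k := (Finset.mem_Ioi.mp hk).ne
        by_cases e1 : i' = t
        · by_cases e2 : k = t
          · exact absurd (e1.trans e2.symm) hik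
          · rw [if_pos e1, if_pos e1, if_neg e2, if_neg e2, if_pos (Or.inl e1)]; ring
        · by_cases e2 : k = t
          · rw [if_neg e1, if_neg e1, if_pos e2, if_pos e2, if_pos (Or.inr e2)]; ring
          · rw [if_neg e1, if_neg e1, if_neg e2, if_neg e2,
              if_neg (by simp [e1, e2] : ¬(i' = t ∨ k = t))]; ring
      have h2 : ∑ i', ∑ k ∈ Finset.Ioi i',
            (if i' = t ∨ k = t then (x i' - y i') * (x k - y k) else 0)
          = (x t - y t) * ((∑ k, (x k - y k)) - (x t - y t)) := by
        rw [← Finset.add_sum_erase _ _ (Finset.mem_univ t)]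
        have e1 : ∑ k ∈ Finset.Ioi t,
            (if t = t ∨ k = t then (x t - y t) * (x k - y k) else 0)
            = (x t - y t) * ∑ k ∈ Finset.Ioi t, (x k - y k) := by
          rw [Finset.mul_sum]
          exact Finset.sum_congr rfl fun k _ => by simp
        have e2 : ∑ i' ∈ Finset.univ.erase t, (∑ k ∈ Finset.Ioi i',
            (if i' = t ∨ k = t then (x i' - y i') * (x k - y k) else 0))
            = (∑ i' ∈ Finset.Iio t, (x i' - y i')) * (x t - y t) := by
          rw [Finset.sum_mul]
          rw [show Finset.Iio t = (Finset.univ.erase t).filter (· < t) by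
            ext k
            simp only [Finset.mem_filter, Finset.mem_erase, Finset.mem_univ,
              true_and, and_true, Finset.mem_Iio]
            exact ⟨fun h' => ⟨h'.ne, h'⟩, fun h' => h'.2⟩]
          rw [Finset.sum_filter]
          refine Finset.sum_congr rfl fun i' hi' => ?_
          have hne : i' ≠ t := (Finset.mem_erase.mp hi').1
          simp only [hne, false_or]
          rw [Finset.sum_ite_eq' (Finset.Ioi i') t fun k => (x i' - y i') * (x k - y k)]
          simp only [Finset.mem_Ioi]
        rw [e1, e2]
        have hsplit : (∑ k ∈ Finset.Iio t, (x k - y k)) + ∑ k ∈ Finset.Ioi t, (x k - y k)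
            = (∑ k, (x k - y k)) - (x t - y t) := by
          rw [← Finset.sum_erase_eq_sub (Finset.mem_univ t)]
          rw [show (Finset.univ.erase t : Finset (Fin N)) = Finset.Iio t ∪ Finset.Ioi t by
            ext k
            simp only [Finset.mem_erase, Finset.mem_univ, and_true, Finset.mem_union,
              Finset.mem_Iio, Finset.mem_Ioi]
            exact lt_or_lt_iff_ne.symm]
          rw [Finset.sum_union]
          exact Finset.disjoint_left.mpr fun k hk1 hk2 =>
            absurd (Finset.mem_Ioi.mp hk2) (not_lt.mpr (Finset.mem_Iio.mp hk1).le)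
        rw [← hsplit]; ring
      rw [h1, h2] at h0
      exact h0
    exact aux (key i) (key j)
  · intro h p hp σ
    rw [sum2_cost, sum2_cost]
    refine Finset.sum_le_sum fun i _ => Finset.sum_le_sum fun k hk => ?_
    have hik : i < k := Finset.mem_Ioi.mp hk
    have h1 := h i k hik (p 0) (hp 0) (p 1) (hp 1)
    rcases perm2 (σ i) with ⟨e1, e2⟩ | ⟨e1, e2⟩ <;>
      rcases perm2 (σ k) with ⟨f1, f2⟩ | ⟨f1, f2⟩ <;>
      rw [e1, e2, f1, f2] <;> nlinarith [h1]
end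

section
/- For each 1 ≤ i ≤ N let α_i : ℝ → ℝ be continuous, strictly increasing, onto, with α_i(0) = 0. Then for all (x_1,...,x_N) ∈ ℝ^N: ∑_{1≤i<j≤N} x_i x_j ≤ ∑_{i=1}^N ∫_0^{x_i} (∑_{k≠i} α_k(α_i^{-1}(t))) dt, with equality if and only if x_j = α_j(α_i^{-1}(x_i)) for all 1 ≤ i < j ≤ N (equivalently: there exists t ∈ ℝ with x_i = α_i(t) for all i). -/
/-!
Expanding the inner integrals and pairing the term `k = j` of the `i`-th integral with the term
`k = i` of the `j`-th one, the right-hand side becomes a sum over pairs `i < j` of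
`∫_0^{x_i} g + ∫_0^{x_j} g⁻¹` with `g = α_j ∘ α_i⁻¹`, so the theorem is the sum of the
two-variable Young inequalities, with equality iff `x_j = g (x_i)` for every pair, that is, iff
`α_i⁻¹ (x_i)` does not depend on `i`.

Young's inequality itself rests on the inverse-function identity
`∫_0^a g + ∫_0^{g a} g⁻¹ = a g(a)`: since both integrands are monotone, the left side minus the
right side changes by at most `|g a - g a₀| |a - a₀| = o(|a - a₀|)` between `a₀` and `a`, so it
has derivative zero although `g` need not be differentiable. With `a₀ = g⁻¹ b` the identity turns
`∫_0^a g + ∫_0^b g⁻¹ - a b` into `∫_{a₀}^a (g t - g a₀) dt`, which is positive unless `a = a₀`.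
-/

open Function Finset Asymptotics intervalIntegral
open MeasureTheory (volume)

lemma hasDerivAt_zero_of_abs_sub_le_mul {F φ : ℝ → ℝ} {x₀ : ℝ} (hφ : ContinuousAt φ x₀)
    (hF : ∀ x, |F x - F x₀| ≤ |φ x - φ x₀| * |x - x₀|) : HasDerivAt F 0 x₀ := by
  rw [hasDerivAt_iff_isLittleO]
  simp only [smul_zero, sub_zero]
  have hφ' : (fun x => φ x - φ x₀) =o[nhds x₀] (fun _ => (1 : ℝ)) :=
    (isLittleO_one_iff ℝ).mpr (tendsto_sub_nhds_zero_iff.mpr hφ)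
  have hprod := hφ'.mul_isBigO (isBigO_refl (fun x => x - x₀) (nhds x₀))
  simp only [one_mul] at hprod
  refine IsBigO.trans_isLittleO (IsBigO.of_bound 1 (Filter.Eventually.of_forall fun x => ?_)) hprod
  simpa [Real.norm_eq_abs, abs_mul] using hF x

section Young

variable {g g' : ℝ → ℝ}

lemma Monotone.mul_sub_le_integral (hg : Monotone g) {a b : ℝ} (hab : a ≤ b) :
    g a * (b - a) ≤ ∫ t in a..b, g t := by
  simpa [mul_comm] using integral_mono_on (μ := volume) hab intervalIntegrable_const
    hg.intervalIntegrable fun t ht => hg ht.1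

lemma Monotone.integral_le_mul_sub (hg : Monotone g) {a b : ℝ} (hab : a ≤ b) :
    ∫ t in a..b, g t ≤ g b * (b - a) := by
  simpa [mul_comm] using integral_mono_on (μ := volume) hab hg.intervalIntegrable
    intervalIntegrable_const fun t ht => hg ht.2

noncomputable def inverseIntegralDefect (g g' : ℝ → ℝ) (a : ℝ) : ℝ :=
  (∫ t in 0..a, g t) + (∫ t in 0..g a, g' t) - a * g a

lemma abs_inverseIntegralDefect_sub_le (hg : Monotone g) (hg' : Monotone g')
    (hl : LeftInverse g' g) (a₀ a : ℝ) :
    |inverseIntegralDefect g g' a - inverseIntegralDefect g g' a₀| ≤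
      |g a - g a₀| * |a - a₀| := by
  wlog h : a₀ ≤ a generalizing a₀ a
  · rw [abs_sub_comm, abs_sub_comm (g a), abs_sub_comm a]
    exact this a a₀ (le_of_not_ge h)
  have hga : g a₀ ≤ g a := hg h
  have hI := integral_interval_sub_left (μ := volume) (a := 0) (b := a) (c := a₀)
    hg.intervalIntegrable hg.intervalIntegrable
  have hI' := integral_interval_sub_left (μ := volume) (a := 0) (b := g a) (c := g a₀)
    hg'.intervalIntegrable hg'.intervalIntegrable
  have hdiff : inverseIntegralDefect g g' a - inverseIntegralDefect g g' a₀ =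
      (∫ t in a₀..a, g t) + (∫ t in g a₀..g a, g' t) - (a * g a - a₀ * g a₀) := by
    simp only [inverseIntegralDefect]
    linarith
  have h₁ := hg.mul_sub_le_integral h
  have h₂ := hg.integral_le_mul_sub h
  have h₃ := hg'.mul_sub_le_integral hga
  have h₄ := hg'.integral_le_mul_sub hga
  rw [hl] at h₃ h₄
  rw [hdiff, abs_of_nonneg (sub_nonneg.mpr hga), abs_of_nonneg (sub_nonneg.mpr h), abs_le]
  constructor <;> linarith

lemma integral_add_integral_inverse_eq_mul (hg : Monotone g) (hgc : Continuous g)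
    (hg' : Monotone g') (hl : LeftInverse g' g) (h0 : g 0 = 0) (a : ℝ) :
    (∫ t in 0..a, g t) + ∫ t in 0..g a, g' t = a * g a := by
  have hderiv (x : ℝ) : HasDerivAt (inverseIntegralDefect g g') 0 x :=
    hasDerivAt_zero_of_abs_sub_le_mul hgc.continuousAt
      fun y => abs_inverseIntegralDefect_sub_le hg hg' hl x y
  have hconst := is_const_of_deriv_eq_zero (fun x => (hderiv x).differentiableAt)
    (fun x => (hderiv x).deriv) a 0
  simp only [inverseIntegralDefect, h0, integral_same, zero_mul, sub_zero, add_zero] at hconst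
  linarith

lemma StrictMono.integral_sub_apply_pos (hg : StrictMono g) {a c : ℝ} (h : c ≠ a) :
    0 < ∫ t in c..a, (g t - g c) := by
  rcases h.lt_or_gt with hca | hac
  · exact intervalIntegral_pos_of_pos_on
      (hg.monotone.intervalIntegrable.sub intervalIntegrable_const)
      (fun t ht => sub_pos.mpr (hg ht.1)) hca
  · have hpos : 0 < ∫ t in a..c, (g c - g t) := intervalIntegral_pos_of_pos_on
      (intervalIntegrable_const.sub hg.monotone.intervalIntegrable)
      (fun t ht => sub_pos.mpr (hg ht.2)) hac
    rwa [integral_symm, ← integral_neg, integral_congr fun t _ => neg_sub (g t) (g c)]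

lemma young_gap_eq_integral (hg : StrictMono g) (hl : LeftInverse g' g)
    (hr : RightInverse g' g) (h0 : g 0 = 0) (a b : ℝ) :
    (∫ t in 0..a, g t) + (∫ t in 0..b, g' t) - a * b = ∫ t in g' b..a, (g t - b) := by
  let e := hg.orderIsoOfRightInverse g g' hr
  obtain ⟨a₀, rfl⟩ := hr.surjective b
  have hident := integral_add_integral_inverse_eq_mul (g' := g') hg.monotone e.continuous
    e.symm.monotone hl h0 a₀
  have hI := integral_interval_sub_left (μ := volume) (a := 0) (b := a) (c := a₀)
    hg.monotone.intervalIntegrable hg.monotone.intervalIntegrable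
  rw [hl a₀, integral_sub hg.monotone.intervalIntegrable intervalIntegrable_const,
    integral_const, smul_eq_mul]
  linarith

theorem young_inequality_integral (hg : StrictMono g) (hl : LeftInverse g' g)
    (hr : RightInverse g' g) (h0 : g 0 = 0) (a b : ℝ) :
    a * b ≤ (∫ t in 0..a, g t) + ∫ t in 0..b, g' t ∧
      (a * b = (∫ t in 0..a, g t) + ∫ t in 0..b, g' t ↔ b = g a) := by
  have hgap := young_gap_eq_integral hg hl hr h0 a b
  by_cases hb : b = g a
  · subst hb
    rw [hl a, integral_same] at hgap
    exact ⟨by linarith, iff_of_true (by linarith) rfl⟩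
  · have hne : g' b ≠ a := by
      rintro rfl
      exact hb (hr b).symm
    have hpos := hg.integral_sub_apply_pos hne
    rw [hr b] at hpos
    exact ⟨by linarith, iff_of_false (by linarith) hb⟩

end Young

lemma Finset.sum_le_sum_and_eq_iff {ι M : Type*} [AddCommMonoid M] [PartialOrder M]
    [IsOrderedCancelAddMonoid M] {s : Finset ι} {f g : ι → M} {p : ι → Prop}
    (h : ∀ i ∈ s, f i ≤ g i ∧ (f i = g i ↔ p i)) :
    ∑ i ∈ s, f i ≤ ∑ i ∈ s, g i ∧ (∑ i ∈ s, f i = ∑ i ∈ s, g i ↔ ∀ i ∈ s, p i) := by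
  have hle (i : ι) (hi : i ∈ s) : f i ≤ g i := (h i hi).1
  refine ⟨sum_le_sum hle, ?_⟩
  rw [sum_eq_sum_iff_of_le hle]
  exact forall₂_congr fun i hi => (h i hi).2

lemma Finset.sum_sum_erase_eq_sum_sum_Ioi_add_swap {ι M : Type*} [LinearOrder ι] [Fintype ι]
    [LocallyFiniteOrderTop ι] [LocallyFiniteOrderBot ι] [AddCommMonoid M] (f : ι → ι → M) :
    ∑ i, ∑ k ∈ univ.erase i, f i k = ∑ i, ∑ j ∈ Ioi i, (f i j + f j i) := by
  simp_rw [← compl_singleton, ← Ioi_disjUnion_Iio, sum_disjUnion, sum_add_distrib]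
  congr 1
  exact sum_comm' fun i j => by simp

lemma exists_forall_eq_apply_iff {ι : Type*} [LinearOrder ι] {α β : ι → ℝ → ℝ}
    (hl : ∀ i, LeftInverse (β i) (α i)) (hr : ∀ i, RightInverse (β i) (α i)) (x : ι → ℝ) :
    (∀ i j, i < j → x j = α j (β i (x i))) ↔ ∃ t, ∀ i, x i = α i t := by
  constructor
  · intro h
    rcases isEmpty_or_nonempty ι with hι | ⟨⟨i₀⟩⟩
    · exact ⟨0, fun i => isEmptyElim i⟩
    refine ⟨β i₀ (x i₀), fun i => ?_⟩
    rcases lt_trichotomy i₀ i with hlt | rfl | hgt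
    · exact h i₀ i hlt
    · exact (hr i₀ (x i₀)).symm
    · rw [h i i₀ hgt, hl i₀, hr i]
  · rintro ⟨t, ht⟩ i j _
    rw [ht i, ht j, hl]

theorem multi_marginal_young_inequality_general
    {N : ℕ} (α β : Fin N → ℝ → ℝ)
    (hmono : ∀ i, StrictMono (α i))
    (hzero : ∀ i, α i 0 = 0)
    -- `β i` is the inverse function of `α i`:
    (hinv : ∀ i, Function.LeftInverse (β i) (α i) ∧ Function.RightInverse (β i) (α i))
    (x : Fin N → ℝ) :
    ((∑ i, ∑ j ∈ Finset.Ioi i, x i * x j) ≤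
        ∑ i, ∫ t in (0 : ℝ)..(x i), ∑ k ∈ Finset.univ.erase i, α k (β i t)) ∧
      ((∑ i, ∑ j ∈ Finset.Ioi i, x i * x j) =
          (∑ i, ∫ t in (0 : ℝ)..(x i), ∑ k ∈ Finset.univ.erase i, α k (β i t)) ↔
        ∃ t : ℝ, ∀ i, x i = α i t) := by
  have hl i := (hinv i).1
  have hr i := (hinv i).2
  have hβ i : StrictMono (β i) := ((hmono i).orderIsoOfRightInverse _ _ (hr i)).symm.strictMono
  have hβ0 i : β i 0 = 0 := by simpa [hzero i] using hl i 0
  have hpair (i j : Fin N) := young_inequality_integral (g' := fun t => α i (β j t))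
    ((hmono j).comp (hβ i)) (fun t => (congrArg (α i) (hl j _)).trans (hr i t))
    (fun t => (congrArg (α j) (hl i _)).trans (hr j t))
    (by simp [hβ0, hzero]) (x i) (x j)
  have hsplit : ∑ i, ∫ t in (0 : ℝ)..(x i), ∑ k ∈ univ.erase i, α k (β i t) =
      ∑ i, ∑ j ∈ Ioi i, ((∫ t in 0..x i, α j (β i t)) + ∫ t in 0..x j, α i (β j t)) := by
    rw [← sum_sum_erase_eq_sum_sum_Ioi_add_swap fun i k => ∫ t in 0..x i, α k (β i t)]
    exact sum_congr rfl fun i _ =>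
      integral_finsetSum fun k _ => ((hmono k).comp (hβ i)).monotone.intervalIntegrable
  rw [hsplit, ← exists_forall_eq_apply_iff hl hr]
  simpa using sum_le_sum_and_eq_iff (s := univ) fun i _ =>
    sum_le_sum_and_eq_iff (s := Ioi i) fun j _ => hpair i j

theorem multi_marginal_young_inequality
    {N : ℕ} (hN : 2 ≤ N) (α β : Fin N → ℝ → ℝ)
    (hcont : ∀ i, Continuous (α i))
    (hmono : ∀ i, StrictMono (α i))
    (hsurj : ∀ i, Function.Surjective (α i))
    (hzero : ∀ i, α i 0 = 0)
    -- `β i` is the inverse function of `α i`: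
    (hinv : ∀ i, Function.LeftInverse (β i) (α i) ∧ Function.RightInverse (β i) (α i))
    (x : Fin N → ℝ) :
    ((∑ i, ∑ j ∈ Finset.Ioi i, x i * x j) ≤
        ∑ i, ∫ t in (0 : ℝ)..(x i), ∑ k ∈ Finset.univ.erase i, α k (β i t)) ∧
      ((∑ i, ∑ j ∈ Finset.Ioi i, x i * x j) =
          (∑ i, ∫ t in (0 : ℝ)..(x i), ∑ k ∈ Finset.univ.erase i, α k (β i t)) ↔
        ∃ t : ℝ, ∀ i, x i = α i t) :=
  multi_marginal_young_inequality_general α β hmono hzero hinv x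
end
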